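/- arXiv:2111.13987 — 4 statements merged into one kernel-verified Lean document; each statement's English description precedes it below -/
import Mathlib

section
/- Under the two-modality linear-Gaussian setup, for every β ∈ [0,1] with β̄ = 1 − β, the matrix K_β = G_βW − I_d satisfies K_β = β K_x + β̄ K_y, and K_β is negative definite. -/
open Matrix

/-
Stacking the two encoders gives `G_β W = β G_x W_x + (1 - β) G_y W_y`, which is the affine
identity for `K_β`. For each modality, with `A = Wᵀ Ψ⁻¹ W` positive semidefinite, the gain
satisfies `1 - (A + 1)⁻¹ A = (A + 1)⁻¹`, so `-K = (A + 1)⁻¹` is positive definite; a convex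
combination of positive definite matrices is positive definite.
-/

namespace Matrix

variable {l m n R : Type*}

theorem fromCols_smul_mul_fromRows_sub_one [Fintype m] [Fintype n] [DecidableEq l] [CommRing R]
    (A₁ : Matrix l m R) (A₂ : Matrix l n R) (B₁ : Matrix m l R) (B₂ : Matrix n l R) (t : R) :
    fromCols (t • A₁) ((1 - t) • A₂) * fromRows B₁ B₂ - 1 =
      t • (A₁ * B₁ - 1) + (1 - t) • (A₂ * B₂ - 1) := by
  rw [fromCols_mul_fromRows, smul_mul, smul_mul]
  module

theorem one_sub_inv_add_one_mul [Fintype n] [DecidableEq n] [CommRing R] {M : Matrix n n R}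
    (h : IsUnit (M + 1)) : 1 - (M + 1)⁻¹ * M = (M + 1)⁻¹ := by
  calc 1 - (M + 1)⁻¹ * M = (M + 1)⁻¹ * (M + 1) - (M + 1)⁻¹ * M := by
        rw [nonsing_inv_mul _ ((isUnit_iff_isUnit_det _).1 h)]
    _ = (M + 1)⁻¹ := by rw [← Matrix.mul_sub, add_sub_cancel_left, Matrix.mul_one]

theorem PosDef.smul_add_one_sub_smul [Fintype n] {A B : Matrix n n ℝ} (hA : A.PosDef)
    (hB : B.PosDef) {t : ℝ} (h0 : 0 ≤ t) (h1 : t ≤ 1) : (t • A + (1 - t) • B).PosDef := by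
  rcases h0.eq_or_lt with rfl | ht
  · simpa using hB
  · exact (hA.smul ht).add_posSemidef (hB.posSemidef.smul (sub_nonneg.2 h1))

open scoped ComplexOrder in
theorem PosDef.one_sub_inv_mul_conjTranspose_mul_inv_mul [Fintype m] [Fintype n] [DecidableEq m]
    [DecidableEq n] {𝕜 : Type*} [RCLike 𝕜] {Ψ : Matrix m m 𝕜} (hΨ : Ψ.PosDef) (W : Matrix m n 𝕜) :
    (1 - (Wᴴ * Ψ⁻¹ * W + 1)⁻¹ * Wᴴ * Ψ⁻¹ * W).PosDef := by
  have hA : (Wᴴ * Ψ⁻¹ * W).PosSemidef := hΨ.inv.posSemidef.conjTranspose_mul_mul_same W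
  have hA1 : (Wᴴ * Ψ⁻¹ * W + 1).PosDef := PosDef.posSemidef_add hA .one
  rw [show (Wᴴ * Ψ⁻¹ * W + 1)⁻¹ * Wᴴ * Ψ⁻¹ * W = (Wᴴ * Ψ⁻¹ * W + 1)⁻¹ * (Wᴴ * Ψ⁻¹ * W) by
    simp only [Matrix.mul_assoc], one_sub_inv_add_one_mul hA1.isUnit]
  exact hA1.inv

end Matrix

theorem stmt_5_general    (d p q : ℕ)
    (Wx : Matrix (Fin p) (Fin d) ℝ) (Wy : Matrix (Fin q) (Fin d) ℝ)
    (σx σy : ℝ) (hσx : 0 < σx) (hσy : 0 < σy)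
    (β : ℝ) (hβ : β ∈ Set.Icc (0 : ℝ) 1) :
    let Ψx : Matrix (Fin p) (Fin p) ℝ := σx ^ 2 • (1 : Matrix (Fin p) (Fin p) ℝ)
    let Ψy : Matrix (Fin q) (Fin q) ℝ := σy ^ 2 • (1 : Matrix (Fin q) (Fin q) ℝ)
    let W : Matrix (Fin p ⊕ Fin q) (Fin d) ℝ := Matrix.fromRows Wx Wy
    let Ψ : Matrix (Fin p ⊕ Fin q) (Fin p ⊕ Fin q) ℝ := Matrix.fromBlocks Ψx 0 0 Ψy
    let Gx : Matrix (Fin d) (Fin p) ℝ := (Wxᵀ * Ψx⁻¹ * Wx + 1)⁻¹ * Wxᵀ * Ψx⁻¹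
    let Gy : Matrix (Fin d) (Fin q) ℝ := (Wyᵀ * Ψy⁻¹ * Wy + 1)⁻¹ * Wyᵀ * Ψy⁻¹
    let Gβ : Matrix (Fin d) (Fin p ⊕ Fin q) ℝ := Matrix.fromCols (β • Gx) ((1 - β) • Gy)
    let Kx : Matrix (Fin d) (Fin d) ℝ := Gx * Wx - 1
    let Ky : Matrix (Fin d) (Fin d) ℝ := Gy * Wy - 1
    let Kβ : Matrix (Fin d) (Fin d) ℝ := Gβ * W - 1
    Kβ = β • Kx + (1 - β) • Ky ∧ (-Kβ).PosDef := by
  intro Ψx Ψy W _ Gx Gy Gβ Kx Ky Kβ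
  obtain ⟨h0, h1⟩ := hβ
  have hK : Kβ = β • Kx + (1 - β) • Ky := fromCols_smul_mul_fromRows_sub_one _ _ _ _ _
  have hKx : (-Kx).PosDef := by
    have := (PosDef.one.smul (pow_pos hσx 2)).one_sub_inv_mul_conjTranspose_mul_inv_mul Wx
    rwa [conjTranspose_eq_transpose_of_trivial, ← neg_sub] at this
  have hKy : (-Ky).PosDef := by
    have := (PosDef.one.smul (pow_pos hσy 2)).one_sub_inv_mul_conjTranspose_mul_inv_mul Wy
    rwa [conjTranspose_eq_transpose_of_trivial, ← neg_sub] at this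
  refine ⟨hK, ?_⟩
  rw [hK, neg_add, ← smul_neg, ← smul_neg]
  exact hKx.smul_add_one_sub_smul hKy h0 h1

theorem stmt_5    (d p q : ℕ) (hd : 0 < d) (hp : 0 < p) (hq : 0 < q)
    (Wx : Matrix (Fin p) (Fin d) ℝ) (Wy : Matrix (Fin q) (Fin d) ℝ)
    (σx σy : ℝ) (hσx : 0 < σx) (hσy : 0 < σy)
    (β : ℝ) (hβ : β ∈ Set.Icc (0 : ℝ) 1) :
    let Ψx : Matrix (Fin p) (Fin p) ℝ := σx ^ 2 • (1 : Matrix (Fin p) (Fin p) ℝ)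
    let Ψy : Matrix (Fin q) (Fin q) ℝ := σy ^ 2 • (1 : Matrix (Fin q) (Fin q) ℝ)
    let W : Matrix (Fin p ⊕ Fin q) (Fin d) ℝ := Matrix.fromRows Wx Wy
    let Ψ : Matrix (Fin p ⊕ Fin q) (Fin p ⊕ Fin q) ℝ := Matrix.fromBlocks Ψx 0 0 Ψy
    let Gx : Matrix (Fin d) (Fin p) ℝ := (Wxᵀ * Ψx⁻¹ * Wx + 1)⁻¹ * Wxᵀ * Ψx⁻¹
    let Gy : Matrix (Fin d) (Fin q) ℝ := (Wyᵀ * Ψy⁻¹ * Wy + 1)⁻¹ * Wyᵀ * Ψy⁻¹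
    let Gβ : Matrix (Fin d) (Fin p ⊕ Fin q) ℝ := Matrix.fromCols (β • Gx) ((1 - β) • Gy)
    let Kx : Matrix (Fin d) (Fin d) ℝ := Gx * Wx - 1
    let Ky : Matrix (Fin d) (Fin d) ℝ := Gy * Wy - 1
    let Kβ : Matrix (Fin d) (Fin d) ℝ := Gβ * W - 1
    Kβ = β • Kx + (1 - β) • Ky ∧ (-Kβ).PosDef :=
  stmt_5_general d p q Wx Wy σx σy hσx hσy β hβ
end

section
/- Under the two-modality linear-Gaussian setup, for every β ∈ [0,1], the matrix K_β − K_c is negative semidefinite, i.e., zᵀ(K_β − K_c)z ≤ 0 for all z ∈ ℝ^d. -/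
/-!
Writing `A_x = W_xᵀ Ψ_x⁻¹ W_x` and `A_y = W_yᵀ Ψ_y⁻¹ W_y` (both positive semidefinite), the
identity `(A + 1)⁻¹ A - 1 = -(A + 1)⁻¹` together with `Wᵀ Ψ⁻¹ W = A_x + A_y` gives
`K_β = -(β (A_x + 1)⁻¹ + β̄ (A_y + 1)⁻¹)` and `K_c = -(A_x + A_y + 1)⁻¹`. Since inversion reverses
the Loewner order on positive definite matrices, `(A_x + A_y + 1)⁻¹` is below both `(A_x + 1)⁻¹`
and `(A_y + 1)⁻¹`, hence below their convex combination.
-/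

open Matrix

namespace Matrix

section CommRing

variable {α : Type*} [CommRing α] {m n p q : Type*}

theorem transpose_fromRows_mul_fromBlocks_mul_fromRows [Fintype p] [Fintype q]
    (Wx : Matrix p n α) (Wy : Matrix q n α) (Px : Matrix p p α) (Py : Matrix q q α) :
    (fromRows Wx Wy)ᵀ * fromBlocks Px 0 0 Py * fromRows Wx Wy =
      Wxᵀ * Px * Wx + Wyᵀ * Py * Wy := by
  rw [transpose_fromRows, fromCols_mul_fromBlocks, fromCols_mul_fromRows]
  simp

theorem inv_fromBlocks_zero_zero [Fintype p] [Fintype q] [DecidableEq p] [DecidableEq q]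
    (Px : Matrix p p α) (Py : Matrix q q α) (h : IsUnit Px ↔ IsUnit Py) :
    (fromBlocks Px 0 0 Py)⁻¹ = fromBlocks Px⁻¹ 0 0 Py⁻¹ := by
  simpa using inv_fromBlocks_zero₁₂_of_isUnit_iff Px 0 Py h

theorem inv_transpose_mul_mul_add_one_mul_sub_one [Fintype m] [Fintype n] [DecidableEq n]
    (W : Matrix m n α) (P : Matrix m m α) (h : IsUnit (Wᵀ * P * W + 1).det) :
    (Wᵀ * P * W + 1)⁻¹ * Wᵀ * P * W - 1 = -(Wᵀ * P * W + 1)⁻¹ := by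
  have h1 := nonsing_inv_mul _ h
  rw [mul_add, mul_one] at h1
  simp only [Matrix.mul_assoc] at h1 ⊢
  rw [← sub_eq_zero, sub_neg_eq_add, sub_add_eq_add_sub, h1, sub_self]

end CommRing

variable {n : Type*} [Fintype n] [DecidableEq n]

/- With `u = (A + M)⁻¹ z` and `v = M⁻¹ z`, expanding `0 ≤ (u - v)ᵀ M (u - v)` and using
`uᵀ M u ≤ uᵀ (A + M) u = uᵀ z` leaves `uᵀ z ≤ vᵀ z`. -/
theorem PosDef.dotProduct_inv_add_mulVec_le {M A : Matrix n n ℝ} (hM : M.PosDef)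
    (hA : A.PosSemidef) (z : n → ℝ) :
    z ⬝ᵥ ((A + M)⁻¹ *ᵥ z) ≤ z ⬝ᵥ (M⁻¹ *ᵥ z) := by
  set u := (A + M)⁻¹ *ᵥ z
  set v := M⁻¹ *ᵥ z
  have hu : (A + M) *ᵥ u = z := by
    rw [mulVec_mulVec, mul_nonsing_inv _ ((isUnit_iff_isUnit_det _).mp
      (PosDef.posSemidef_add hA hM).isUnit), one_mulVec]
  have hv : M *ᵥ v = z := by
    rw [mulVec_mulVec, mul_nonsing_inv _ ((isUnit_iff_isUnit_det _).mp hM.isUnit), one_mulVec]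
  have hvMu : v ⬝ᵥ (M *ᵥ u) = u ⬝ᵥ z := by
    rw [dotProduct_mulVec, ← mulVec_transpose, (isHermitian_iff_isSymm.mp hM.isHermitian).eq, hv,
      dotProduct_comm]
  have hAu : 0 ≤ u ⬝ᵥ (A *ᵥ u) := by simpa using hA.dotProduct_mulVec_nonneg u
  have huv : 0 ≤ (u - v) ⬝ᵥ (M *ᵥ (u - v)) := by
    simpa using hM.posSemidef.dotProduct_mulVec_nonneg (u - v)
  have huz : u ⬝ᵥ (A *ᵥ u) + u ⬝ᵥ (M *ᵥ u) = u ⬝ᵥ z := by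
    rw [← dotProduct_add, ← add_mulVec, hu]
  simp only [mulVec_sub, dotProduct_sub, sub_dotProduct, hv, hvMu] at huv
  rw [dotProduct_comm z u, dotProduct_comm z v]
  linarith

theorem PosDef.dotProduct_inv_add_add_mulVec_le {M A B : Matrix n n ℝ} (hM : M.PosDef)
    (hA : A.PosSemidef) (hB : B.PosSemidef) {β : ℝ} (hβ : β ∈ Set.Icc (0 : ℝ) 1) (z : n → ℝ) :
    z ⬝ᵥ (((A + B + M)⁻¹ - (β • (A + M)⁻¹ + (1 - β) • (B + M)⁻¹)) *ᵥ z) ≤ 0 := by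
  have hBA : z ⬝ᵥ ((A + B + M)⁻¹ *ᵥ z) ≤ z ⬝ᵥ ((A + M)⁻¹ *ᵥ z) := by
    rw [show A + B + M = B + (A + M) by abel]
    exact (PosDef.posSemidef_add hA hM).dotProduct_inv_add_mulVec_le hB z
  have hAB : z ⬝ᵥ ((A + B + M)⁻¹ *ᵥ z) ≤ z ⬝ᵥ ((B + M)⁻¹ *ᵥ z) := by
    rw [add_assoc]
    exact (PosDef.posSemidef_add hB hM).dotProduct_inv_add_mulVec_le hA z
  simp only [sub_mulVec, add_mulVec, smul_mulVec, dotProduct_sub, dotProduct_add,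
    dotProduct_smul, smul_eq_mul]
  nlinarith [hβ.1, hβ.2]

end Matrix

theorem stmt_6_general    (d p q : ℕ)
    (Wx : Matrix (Fin p) (Fin d) ℝ) (Wy : Matrix (Fin q) (Fin d) ℝ)
    (σx σy : ℝ) (hσx : 0 < σx) (hσy : 0 < σy)
    (β : ℝ) (hβ : β ∈ Set.Icc (0 : ℝ) 1) :
    let Ψx : Matrix (Fin p) (Fin p) ℝ := σx ^ 2 • (1 : Matrix (Fin p) (Fin p) ℝ)
    let Ψy : Matrix (Fin q) (Fin q) ℝ := σy ^ 2 • (1 : Matrix (Fin q) (Fin q) ℝ)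
    let W : Matrix (Fin p ⊕ Fin q) (Fin d) ℝ := Matrix.fromRows Wx Wy
    let Ψ : Matrix (Fin p ⊕ Fin q) (Fin p ⊕ Fin q) ℝ := Matrix.fromBlocks Ψx 0 0 Ψy
    let Gx : Matrix (Fin d) (Fin p) ℝ := (Wxᵀ * Ψx⁻¹ * Wx + 1)⁻¹ * Wxᵀ * Ψx⁻¹
    let Gy : Matrix (Fin d) (Fin q) ℝ := (Wyᵀ * Ψy⁻¹ * Wy + 1)⁻¹ * Wyᵀ * Ψy⁻¹
    let Gβ : Matrix (Fin d) (Fin p ⊕ Fin q) ℝ := Matrix.fromCols (β • Gx) ((1 - β) • Gy)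
    let Gc : Matrix (Fin d) (Fin p ⊕ Fin q) ℝ := (Wᵀ * Ψ⁻¹ * W + 1)⁻¹ * Wᵀ * Ψ⁻¹
    let Kβ : Matrix (Fin d) (Fin d) ℝ := Gβ * W - 1
    let Kc : Matrix (Fin d) (Fin d) ℝ := Gc * W - 1
    ∀ z : Fin d → ℝ, z ⬝ᵥ ((Kβ - Kc) *ᵥ z) ≤ 0 := by
  intro Ψx Ψy W Ψ Gx Gy Gβ Gc Kβ Kc z
  have hΨx : Ψx.PosDef := PosDef.one.smul (by positivity)
  have hΨy : Ψy.PosDef := PosDef.one.smul (by positivity)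
  set Ax := Wxᵀ * Ψx⁻¹ * Wx
  set Ay := Wyᵀ * Ψy⁻¹ * Wy
  have hAx : Ax.PosSemidef := by simpa using hΨx.inv.posSemidef.conjTranspose_mul_mul_same Wx
  have hAy : Ay.PosSemidef := by simpa using hΨy.inv.posSemidef.conjTranspose_mul_mul_same Wy
  have hunit {A : Matrix (Fin d) (Fin d) ℝ} (hA : A.PosSemidef) : IsUnit (A + 1).det :=
    (isUnit_iff_isUnit_det _).mp (PosDef.posSemidef_add hA PosDef.one).isUnit
  have hW : Wᵀ * Ψ⁻¹ * W = Ax + Ay := by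
    rw [inv_fromBlocks_zero_zero _ _ (iff_of_true hΨx.isUnit hΨy.isUnit)]
    exact transpose_fromRows_mul_fromBlocks_mul_fromRows ..
  have hKβ : Kβ = -(β • (Ax + 1)⁻¹ + (1 - β) • (Ay + 1)⁻¹) := by
    have hKβ_blocks : Kβ = β • (Gx * Wx - 1) + (1 - β) • (Gy * Wy - 1) := by
      simp only [Kβ, Gβ, W, fromCols_mul_fromRows, Matrix.smul_mul]
      module
    rw [hKβ_blocks, inv_transpose_mul_mul_add_one_mul_sub_one _ _ (hunit hAx),
      inv_transpose_mul_mul_add_one_mul_sub_one _ _ (hunit hAy)]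
    module
  have hKc : Kc = -(Ax + Ay + 1)⁻¹ := by
    rw [← hW]
    exact inv_transpose_mul_mul_add_one_mul_sub_one _ _ (hW ▸ hunit (hAx.add hAy))
  rw [hKβ, hKc, neg_sub_neg]
  exact PosDef.one.dotProduct_inv_add_add_mulVec_le hAx hAy hβ z

theorem stmt_6    (d p q : ℕ) (hd : 0 < d) (hp : 0 < p) (hq : 0 < q)
    (Wx : Matrix (Fin p) (Fin d) ℝ) (Wy : Matrix (Fin q) (Fin d) ℝ)
    (σx σy : ℝ) (hσx : 0 < σx) (hσy : 0 < σy)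
    (β : ℝ) (hβ : β ∈ Set.Icc (0 : ℝ) 1) :
    let Ψx : Matrix (Fin p) (Fin p) ℝ := σx ^ 2 • (1 : Matrix (Fin p) (Fin p) ℝ)
    let Ψy : Matrix (Fin q) (Fin q) ℝ := σy ^ 2 • (1 : Matrix (Fin q) (Fin q) ℝ)
    let W : Matrix (Fin p ⊕ Fin q) (Fin d) ℝ := Matrix.fromRows Wx Wy
    let Ψ : Matrix (Fin p ⊕ Fin q) (Fin p ⊕ Fin q) ℝ := Matrix.fromBlocks Ψx 0 0 Ψy
    let Gx : Matrix (Fin d) (Fin p) ℝ := (Wxᵀ * Ψx⁻¹ * Wx + 1)⁻¹ * Wxᵀ * Ψx⁻¹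
    let Gy : Matrix (Fin d) (Fin q) ℝ := (Wyᵀ * Ψy⁻¹ * Wy + 1)⁻¹ * Wyᵀ * Ψy⁻¹
    let Gβ : Matrix (Fin d) (Fin p ⊕ Fin q) ℝ := Matrix.fromCols (β • Gx) ((1 - β) • Gy)
    let Gc : Matrix (Fin d) (Fin p ⊕ Fin q) ℝ := (Wᵀ * Ψ⁻¹ * W + 1)⁻¹ * Wᵀ * Ψ⁻¹
    let Kβ : Matrix (Fin d) (Fin d) ℝ := Gβ * W - 1
    let Kc : Matrix (Fin d) (Fin d) ℝ := Gc * W - 1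
    ∀ z : Fin d → ℝ, z ⬝ᵥ ((Kβ - Kc) *ᵥ z) ≤ 0 :=
  stmt_6_general d p q Wx Wy σx σy hσx hσy β hβ
end

section
/- Under the two-modality linear-Gaussian setup, for every β ∈ [0,1], the matrix K_β + K_c is negative definite. -/
/-!
Write `A = Wᵀ Ψ⁻¹ W` for a positive semidefinite `Ψ`. Then `A` is positive semidefinite and the
gain `G = (A + 1)⁻¹ Wᵀ Ψ⁻¹` satisfies `G W - 1 = -(A + 1)⁻¹`. Applied to the two single-modality
gains and to the joint one, and using `β + β̄ = 1`, this gives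
`-(K_β + K_c) = β (A_x + 1)⁻¹ + β̄ (A_y + 1)⁻¹ + (A + 1)⁻¹`,
a convex combination of positive definite matrices plus a positive definite matrix.
-/

open Matrix

namespace Matrix

theorem inv_add_one_mul_sub_one {n R : Type*} [Fintype n] [DecidableEq n] [CommRing R]
    {M : Matrix n n R} (h : IsUnit (M + 1).det) : (M + 1)⁻¹ * M - 1 = -(M + 1)⁻¹ := by
  calc (M + 1)⁻¹ * M - 1 = (M + 1)⁻¹ * M - (M + 1)⁻¹ * (M + 1) := by rw [nonsing_inv_mul _ h]
    _ = -(M + 1)⁻¹ := by rw [Matrix.mul_add, Matrix.mul_one]; abel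

theorem fromCols_smul_mul_fromRows_sub_one_s7 {n m₁ m₂ R : Type*} [DecidableEq n] [Fintype m₁]
    [Fintype m₂] [CommRing R] (A : Matrix n m₁ R) (B : Matrix n m₂ R) (C : Matrix m₁ n R)
    (D : Matrix m₂ n R) {a b : R} (hab : a + b = 1) :
    fromCols (a • A) (b • B) * fromRows C D - 1 = a • (A * C - 1) + b • (B * D - 1) := by
  rw [fromCols_mul_fromRows, smul_mul, smul_mul]
  linear_combination (norm := module) hab • (1 : Matrix n n R)

namespace PosSemidef

variable {m n : Type*} [Fintype m] [DecidableEq m] [Fintype n] [DecidableEq n]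
  {Ψ : Matrix m m ℝ}

theorem posDef_transpose_mul_inv_mul_add_one (hΨ : Ψ.PosSemidef) (W : Matrix m n ℝ) :
    (Wᵀ * Ψ⁻¹ * W + 1).PosDef :=
  PosDef.posSemidef_add (hΨ.inv.conjTranspose_mul_mul_same W) .one

theorem inv_transpose_mul_inv_mul_add_one_mul_sub_one (hΨ : Ψ.PosSemidef) (W : Matrix m n ℝ) :
    (Wᵀ * Ψ⁻¹ * W + 1)⁻¹ * Wᵀ * Ψ⁻¹ * W - 1 = -(Wᵀ * Ψ⁻¹ * W + 1)⁻¹ := by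
  rw [Matrix.mul_assoc _ Wᵀ, Matrix.mul_assoc]
  exact inv_add_one_mul_sub_one (hΨ.posDef_transpose_mul_inv_mul_add_one W).det_pos.ne'.isUnit

end PosSemidef

end Matrix

theorem stmt_7_general    (d p q : ℕ)
    (Wx : Matrix (Fin p) (Fin d) ℝ) (Wy : Matrix (Fin q) (Fin d) ℝ)
    (σx σy : ℝ)
    (β : ℝ) (hβ : β ∈ Set.Icc (0 : ℝ) 1) :
    let Ψx : Matrix (Fin p) (Fin p) ℝ := σx ^ 2 • (1 : Matrix (Fin p) (Fin p) ℝ)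
    let Ψy : Matrix (Fin q) (Fin q) ℝ := σy ^ 2 • (1 : Matrix (Fin q) (Fin q) ℝ)
    let W : Matrix (Fin p ⊕ Fin q) (Fin d) ℝ := Matrix.fromRows Wx Wy
    let Ψ : Matrix (Fin p ⊕ Fin q) (Fin p ⊕ Fin q) ℝ := Matrix.fromBlocks Ψx 0 0 Ψy
    let Gx : Matrix (Fin d) (Fin p) ℝ := (Wxᵀ * Ψx⁻¹ * Wx + 1)⁻¹ * Wxᵀ * Ψx⁻¹
    let Gy : Matrix (Fin d) (Fin q) ℝ := (Wyᵀ * Ψy⁻¹ * Wy + 1)⁻¹ * Wyᵀ * Ψy⁻¹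
    let Gβ : Matrix (Fin d) (Fin p ⊕ Fin q) ℝ := Matrix.fromCols (β • Gx) ((1 - β) • Gy)
    let Gc : Matrix (Fin d) (Fin p ⊕ Fin q) ℝ := (Wᵀ * Ψ⁻¹ * W + 1)⁻¹ * Wᵀ * Ψ⁻¹
    let Kβ : Matrix (Fin d) (Fin d) ℝ := Gβ * W - 1
    let Kc : Matrix (Fin d) (Fin d) ℝ := Gc * W - 1
    (-(Kβ + Kc)).PosDef := by
  intro Ψx Ψy W Ψ Gx Gy Gβ Gc Kβ Kc
  obtain ⟨hβ0, hβ1⟩ := hβ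
  have hΨx : Ψx.PosSemidef := PosSemidef.one.smul (sq_nonneg σx)
  have hΨy : Ψy.PosSemidef := PosSemidef.one.smul (sq_nonneg σy)
  have hΨ : Ψ.PosSemidef := by
    simp only [Ψ, Ψx, Ψy, smul_one_eq_diagonal, fromBlocks_diagonal]
    exact .diagonal <| Sum.forall.2 ⟨fun _ => sq_nonneg σx, fun _ => sq_nonneg σy⟩
  have hK : -(Kβ + Kc) = β • (Wxᵀ * Ψx⁻¹ * Wx + 1)⁻¹ + (1 - β) • (Wyᵀ * Ψy⁻¹ * Wy + 1)⁻¹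
      + (Wᵀ * Ψ⁻¹ * W + 1)⁻¹ := by
    simp only [Kβ, Kc, Gc, hΨ.inv_transpose_mul_inv_mul_add_one_mul_sub_one]
    simp only [Gβ, W, Gx, Gy, fromCols_smul_mul_fromRows_sub_one_s7 _ _ _ _ (add_sub_cancel β 1),
      hΨx.inv_transpose_mul_inv_mul_add_one_mul_sub_one,
      hΨy.inv_transpose_mul_inv_mul_add_one_mul_sub_one]
    module
  rw [hK]
  exact PosDef.posSemidef_add
    (((hΨx.posDef_transpose_mul_inv_mul_add_one Wx).inv.posSemidef.smul hβ0).add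
      ((hΨy.posDef_transpose_mul_inv_mul_add_one Wy).inv.posSemidef.smul (sub_nonneg.2 hβ1)))
    (hΨ.posDef_transpose_mul_inv_mul_add_one W).inv

theorem stmt_7    (d p q : ℕ) (hd : 0 < d) (hp : 0 < p) (hq : 0 < q)
    (Wx : Matrix (Fin p) (Fin d) ℝ) (Wy : Matrix (Fin q) (Fin d) ℝ)
    (σx σy : ℝ) (hσx : 0 < σx) (hσy : 0 < σy)
    (β : ℝ) (hβ : β ∈ Set.Icc (0 : ℝ) 1) :
    let Ψx : Matrix (Fin p) (Fin p) ℝ := σx ^ 2 • (1 : Matrix (Fin p) (Fin p) ℝ)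
    let Ψy : Matrix (Fin q) (Fin q) ℝ := σy ^ 2 • (1 : Matrix (Fin q) (Fin q) ℝ)
    let W : Matrix (Fin p ⊕ Fin q) (Fin d) ℝ := Matrix.fromRows Wx Wy
    let Ψ : Matrix (Fin p ⊕ Fin q) (Fin p ⊕ Fin q) ℝ := Matrix.fromBlocks Ψx 0 0 Ψy
    let Gx : Matrix (Fin d) (Fin p) ℝ := (Wxᵀ * Ψx⁻¹ * Wx + 1)⁻¹ * Wxᵀ * Ψx⁻¹
    let Gy : Matrix (Fin d) (Fin q) ℝ := (Wyᵀ * Ψy⁻¹ * Wy + 1)⁻¹ * Wyᵀ * Ψy⁻¹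
    let Gβ : Matrix (Fin d) (Fin p ⊕ Fin q) ℝ := Matrix.fromCols (β • Gx) ((1 - β) • Gy)
    let Gc : Matrix (Fin d) (Fin p ⊕ Fin q) ℝ := (Wᵀ * Ψ⁻¹ * W + 1)⁻¹ * Wᵀ * Ψ⁻¹
    let Kβ : Matrix (Fin d) (Fin d) ℝ := Gβ * W - 1
    let Kc : Matrix (Fin d) (Fin d) ℝ := Gc * W - 1
    (-(Kβ + Kc)).PosDef :=
  stmt_7_general d p q Wx Wy σx σy β hβ
end

section
/- Let r_1, …, r_k be orthonormal vectors in ℝ^p, let X_0 be a real p×n matrix, and define recursively X_j = (I_p − r_j r_jᵀ)X_{j−1} for j = 1, …, k (orthogonalized projected deflation). Then for all 1 ≤ j ≤ i ≤ k, r_jᵀX_i = 0. Consequently, for any vector u in the span of {r_1, …, r_j}, uᵀX_i = 0 for all i with j ≤ i ≤ k. -/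
open Matrix MeasureTheory

lemma vecMul_vecMulVec' {p : ℕ} (v a b : Fin p → ℝ) :
    v ᵥ* vecMulVec a b = (v ⬝ᵥ a) • b := by
  funext j
  simp [vecMul, vecMulVec_apply, dotProduct, Finset.sum_mul, mul_assoc, mul_comm]
  ring_nf
  simp [mul_comm, mul_assoc, Finset.mul_sum]

theorem stmt_15 (p n k : ℕ) (r : Fin k → Fin p → ℝ)
    (hr : ∀ i j, r i ⬝ᵥ r j = if i = j then 1 else 0)
    (X : ℕ → Matrix (Fin p) (Fin n) ℝ)
    (hX : ∀ l : Fin k, X ((l : ℕ) + 1) = (1 - vecMulVec (r l) (r l)) * X (l : ℕ)) :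
    (∀ (l : Fin k) (i : ℕ), (l : ℕ) < i → i ≤ k → r l ᵥ* X i = 0) ∧
    (∀ j : ℕ, j ≤ k →
      ∀ u ∈ Submodule.span ℝ {w : Fin p → ℝ | ∃ l : Fin k, (l : ℕ) < j ∧ w = r l},
      ∀ i : ℕ, j ≤ i → i ≤ k → u ᵥ* X i = 0) := by
  have main : ∀ (l : Fin k) (i : ℕ), (l : ℕ) < i → i ≤ k → r l ᵥ* X i = 0 := by
    intro l i
    induction i with
    | zero => omega
    | succ m ih =>
      intro hlm hmk
      have hmlt : m < k := by omega
      have hXm : X (m + 1) = (1 - vecMulVec (r ⟨m, hmlt⟩) (r ⟨m, hmlt⟩)) * X m := by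
        simpa using hX ⟨m, hmlt⟩
      rw [hXm, ← vecMul_vecMul, vecMul_sub, vecMul_one, vecMul_vecMulVec']
      rcases eq_or_lt_of_le (Nat.lt_succ_iff.mp hlm) with heq | hlt
      · have hl : l = ⟨m, hmlt⟩ := by ext; simpa using heq
        rw [hl, hr, if_pos rfl, one_smul, sub_self, zero_vecMul]
      · have hne : l ≠ ⟨m, hmlt⟩ := by intro h; rw [h] at hlt; simp at hlt
        rw [hr, if_neg hne, zero_smul, sub_zero, ih hlt (by omega)]
  refine ⟨main, ?_⟩
  intro j hj u hu i hji hik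
  induction hu using Submodule.span_induction with
  | mem w hw =>
    obtain ⟨l, hl, rfl⟩ := hw
    exact main l i (by omega) hik
  | zero => simp
  | add x y _ _ hx hy => rw [add_vecMul, hx, hy, add_zero]
  | smul c x _ hx => rw [Matrix.smul_vecMul, hx, smul_zero]
end
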